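/- arXiv:2605.21185 — 2 statements merged into one kernel-verified Lean document; each statement's English description precedes it below -/
import Mathlib

section
/- Let k ≥ 2, ε_r > 0, let P_X be a distribution on {1,…,k} with p_i = P_X(i) > 0 and p_1 ≤ … ≤ p_k, and let P_{Y|X} be the k-randomized response mechanism with α = e^{ε_r}/(e^{ε_r}+k−1), β = 1/(e^{ε_r}+k−1), q_j = β + (α−β)p_j. Fix δ ∈ (q_1, 1), let N ∈ {2,…,k} be the unique index with Σ_{j=1}^{N−1} q_j < δ ≤ Σ_{j=1}^{N} q_j, and set θ = (δ − Σ_{j=1}^{N−1} q_j)/q_N ∈ (0,1]. Suppose the prior satisfies p_N ≤ (α Σ_{j=1}^{N−1} p_j + β)/((N−2)α + β). Then the PML envelope satisfies ε_c(δ) ≥ h_δ(θ), where h_δ(θ) = log(α/q_{N−1}) if 0 < θ ≤ θ_1; h_δ(θ) = log(((N−1)α + θβ)/δ) if θ_1 < θ ≤ θ_2; and h_δ(θ) = log(α/q_N) if θ_2 < θ ≤ 1; with θ_1 = α((N−2)q_{N−1} − Σ_{j=1}^{N−2} q_j)/(α q_N − β q_{N−1}) and θ_2 = α((N−1)q_N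 − Σ_{j=1}^{N−1} q_j)/(q_N(α−β)). -/
open Real Finset
open scoped Classical

noncomputable section

/-- Marginal distribution of the first coordinate of a joint distribution. -/
def margX {X Y : Type} [Fintype Y] (P : X → Y → ℝ) (x : X) : ℝ := ∑ y, P x y

/-- Marginal distribution of the second coordinate of a joint distribution. -/
def margY {X Y : Type} [Fintype X] (P : X → Y → ℝ) (y : Y) : ℝ := ∑ x, P x y

/-- `P` is a joint probability distribution on `X × Y`. -/
def IsJoint {X Y : Type} [Fintype X] [Fintype Y] (P : X → Y → ℝ) : Prop :=
  (∀ x y, 0 ≤ P x y) ∧ (∑ x, ∑ y, P x y) = 1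

/-- Conditional probability `P_{Y|X=x}(y)` of the second coordinate given the first. -/
def condYX {X Y : Type} [Fintype Y] (P : X → Y → ℝ) (x : X) (y : Y) : ℝ :=
  P x y / margX P x

/-- Pointwise maximal leakage of the outcome `y`:
`ℓ(X → y) = log (max_x P_{Y|X=x}(y) / P_Y(y))`. -/
def pml {X Y : Type} [Fintype X] [Fintype Y] (P : X → Y → ℝ) (y : Y) : ℝ :=
  Real.log ((⨆ x, condYX P x y) / margY P y)

/-- `K` is a Markov kernel (a conditional distribution). -/
def IsKernel {Y Z : Type} [Fintype Z] (K : Y → Z → ℝ) : Prop :=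
  (∀ y z, 0 ≤ K y z) ∧ ∀ y, (∑ z, K y z) = 1

/-- Joint distribution of `(X, Z)` obtained by post-processing `Y` with the kernel `K`
(marginalizing out `Y`); this encodes the Markov chain `X - Y - Z`. -/
def pushKernel {X Y Z : Type} [Fintype Y] (P : X → Y → ℝ) (K : Y → Z → ℝ)
    (x : X) (z : Z) : ℝ :=
  ∑ y, P x y * K y z

/-- Left-continuous quantile of the leakage random variable:
`ubar ε_Z(δ) = inf {t ≥ 0 : ℙ(ℓ(Z) ≤ t) ≥ 1 - δ}`. -/
def ubarEps {X Z : Type} [Fintype X] [Fintype Z] (Q : X → Z → ℝ) (δ : ℝ) : ℝ :=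
  sInf {t : ℝ | 0 ≤ t ∧
    1 - δ ≤ ∑ z ∈ Finset.univ.filter (fun z => pml Q z ≤ t), margY Q z}

/-- The PML envelope: the supremum of the left-continuous leakage quantile over all
finite post-processings `Z` of `Y` (i.e., over all Markov chains `X - Y - Z`). -/
def pmlEnvelope {X Y : Type} [Fintype X] [Fintype Y] (P : X → Y → ℝ) (δ : ℝ) : ℝ :=
  sSup {e : ℝ | ∃ (n : ℕ) (K : Y → Fin n → ℝ),
    IsKernel K ∧ e = ubarEps (pushKernel P K) δ}

/-!
Lower bounds on the envelope come from explicit post-processings: if a set of outcomes of `Z`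
has probability `> δ` and each of them leaks at least `τ`, the quantile `ubarEps` is at least `τ`.
All post-processings used redraw a single output `y₀` of the randomized response from a
distribution `r` and keep every other output.

Indices start at `0` (output `j` is the paper's `j + 1`) and `n = N - 1`. Spreading a fraction `G`
of output `n` over the outputs `j < n` with weights `r_j = (α - Λ q_j) / (Λ q_n - β)` gives all of
them the same leakage `log Λ(G)`, `Λ(G) = (n α + G β) / (Σ_{j<n} q_j + G q_n)`, on a set of
probability `Σ_{j<n} q_j + G q_n`. The weights are nonnegative iff `G ≥ θ₁`, and output `n` itself
(kept with probability `1 - G`) leaks `log (α / q_n) ≥ log Λ(G)` iff `G ≥ θ₂`; moreover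
`Λ(θ₁) = α / q_{n-1}` and `Λ(θ₂) = α / q_n`, so `h_δ(θ) = log Λ(max θ₁ (min θ θ₂))`. This value
is attained with `G = θ₁` if `θ < θ₁`, in the limit `G ↓ θ` if `θ₁ ≤ θ ≤ θ₂`, and with `G = θ₂`
and output `n` added if `θ₂ < θ < 1`; the prior condition is exactly `θ₂ ≤ 1`. For `θ = 1`,
merging a fraction `σ ↓ 0` of output `n + 1` into output `n` gives `log (α / q_n)`.
-/

section Leakage

variable {X Y Z : Type}

lemma IsJoint.margY_nonneg [Fintype X] [Fintype Y] {P : X → Y → ℝ} (hP : IsJoint P) (y : Y) :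
    0 ≤ margY P y :=
  Finset.sum_nonneg fun x _ => hP.1 x y

lemma IsJoint.sum_margY [Fintype X] [Fintype Y] {P : X → Y → ℝ} (hP : IsJoint P) :
    ∑ y, margY P y = 1 := by
  rw [← hP.2]
  exact Finset.sum_comm

lemma margX_pushKernel [Fintype Y] [Fintype Z] (P : X → Y → ℝ) {K : Y → Z → ℝ} (hK : IsKernel K)
    (x : X) :
    margX (pushKernel P K) x = margX P x := by
  simp only [margX, pushKernel]
  rw [Finset.sum_comm]
  simp [← Finset.mul_sum, hK.2]

lemma margY_pushKernel [Fintype X] [Fintype Y] (P : X → Y → ℝ) (K : Y → Z → ℝ) (z : Z) :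
    margY (pushKernel P K) z = ∑ y, margY P y * K y z := by
  simp only [margY, pushKernel, Finset.sum_mul]
  exact Finset.sum_comm

lemma isJoint_pushKernel [Fintype X] [Fintype Y] [Fintype Z] {P : X → Y → ℝ} {K : Y → Z → ℝ}
    (hP : IsJoint P) (hK : IsKernel K) : IsJoint (pushKernel P K) :=
  ⟨fun x z => Finset.sum_nonneg fun y _ => mul_nonneg (hP.1 x y) (hK.1 y z),
    (Finset.sum_congr rfl fun x _ => margX_pushKernel P hK x).trans hP.2⟩

lemma log_div_le_pml [Fintype X] [Fintype Z] {Q : X → Z → ℝ} {x : X} {z : Z}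
    (hc : 0 < condYX Q x z) (hm : 0 < margY Q z) : Real.log (condYX Q x z / margY Q z) ≤ pml Q z :=
  Real.log_le_log (div_pos hc hm) <| div_le_div_of_nonneg_right
    (le_ciSup (f := fun x => condYX Q x z) (Set.finite_range _).bddAbove x) hm.le

lemma pml_le_log [Fintype X] [Fintype Z] {Q : X → Z → ℝ} {C : ℝ} (hC : 1 ≤ C)
    (hQ : ∀ x z, 0 ≤ Q x z) (hQC : ∀ x z, Q x z ≤ margX Q x * C * margY Q z) (z : Z) :
    pml Q z ≤ Real.log C := by
  have hm : 0 ≤ margY Q z := Finset.sum_nonneg fun x _ => hQ x z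
  have hCm : 0 ≤ C * margY Q z := mul_nonneg (by linarith) hm
  have hcond : ∀ x, condYX Q x z ≤ C * margY Q z := fun x =>
    div_le_of_le_mul₀ (Finset.sum_nonneg fun y _ => hQ x y) hCm (by linarith [hQC x z])
  have hsup : (⨆ x, condYX Q x z) / margY Q z ≤ C :=
    div_le_of_le_mul₀ hm (by linarith) (Real.iSup_le hcond hCm)
  have hsup0 : 0 ≤ (⨆ x, condYX Q x z) / margY Q z :=
    div_nonneg (Real.iSup_nonneg fun x =>
      div_nonneg (hQ x z) (Finset.sum_nonneg fun y _ => hQ x y)) hm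
  rcases hsup0.eq_or_lt with h0 | hpos
  · rw [pml, ← h0, Real.log_zero]
    exact Real.log_nonneg hC
  · exact Real.log_le_log hpos hsup

lemma pushKernel_le_mul_margY [Fintype X] [Fintype Y] [Fintype Z] {P : X → Y → ℝ}
    {K : Y → Z → ℝ} {C : ℝ} (hK : IsKernel K) (hPC : ∀ x y, P x y ≤ margX P x * C * margY P y)
    (x : X) (z : Z) :
    pushKernel P K x z ≤ margX (pushKernel P K) x * C * margY (pushKernel P K) z := by
  rw [margX_pushKernel P hK, margY_pushKernel, Finset.mul_sum]
  exact Finset.sum_le_sum fun y _ => by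
    rw [← mul_assoc]
    exact mul_le_mul_of_nonneg_right (hPC x y) (hK.1 y z)

lemma le_margX_mul_margY [Fintype X] [Fintype Y] {P : X → Y → ℝ} (hP : ∀ x y, 0 ≤ P x y)
    (hPY : ∀ y, 0 < margY P y) (x : X) (y : Y) :
    P x y ≤ margX P x * (1 + ∑ y', (margY P y')⁻¹) * margY P y := by
  have hx : P x y ≤ margX P x :=
    Finset.single_le_sum (fun y' _ => hP x y') (Finset.mem_univ y)
  have hinv : (margY P y)⁻¹ ≤ 1 + ∑ y', (margY P y')⁻¹ := by
    have := Finset.single_le_sum (fun y' _ => (inv_pos.mpr (hPY y')).le) (Finset.mem_univ y)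
    linarith
  calc P x y ≤ margX P x * ((margY P y)⁻¹ * margY P y) := by
        rwa [inv_mul_cancel₀ (hPY y).ne', mul_one]
    _ ≤ margX P x * ((1 + ∑ y', (margY P y')⁻¹) * margY P y) := by
        gcongr
        · exact (hP x y).trans hx
        · exact (hPY y).le
    _ = _ := by ring

end Leakage

section Relabel

variable {X Y Z W : Type} [Fintype X] [Fintype Z] [Fintype W]

lemma pml_comp_equiv (Q : X → Z → ℝ) (e : W ≃ Z) (w : W) :
    pml (fun x w => Q x (e w)) w = pml Q (e w) := by
  have hX : ∀ x, margX (fun x w => Q x (e w)) x = margX Q x := fun x => e.sum_comp (Q x)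
  simp only [pml, condYX, hX]
  rfl

lemma ubarEps_comp_equiv (Q : X → Z → ℝ) (e : W ≃ Z) (δ : ℝ) :
    ubarEps (fun x w => Q x (e w)) δ = ubarEps Q δ := by
  simp only [ubarEps, pml_comp_equiv, Finset.sum_filter]
  congr! 4 with t
  rw [← e.sum_comp (fun z => if pml Q z ≤ t then margY Q z else 0)]
  rfl

end Relabel

section Quantile

variable {X Y Z : Type} [Fintype X] [Fintype Z]

lemma ubarEps_le {Q : X → Z → ℝ} (hQ : IsJoint Q) {δ C : ℝ} (hδ : 0 ≤ δ) (hC : 0 ≤ C)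
    (h : ∀ z, pml Q z ≤ C) : ubarEps Q δ ≤ C :=
  csInf_le ⟨0, fun _ ht => ht.1⟩
    ⟨hC, by rw [Finset.filter_true_of_mem fun z _ => h z, hQ.sum_margY]; linarith⟩

lemma le_ubarEps {Q : X → Z → ℝ} (hQ : IsJoint Q) {δ τ : ℝ} (hδ : 0 ≤ δ) (T : Finset Z)
    (hT : ∀ z ∈ T, τ ≤ pml Q z) (hmass : δ < ∑ z ∈ T, margY Q z) : τ ≤ ubarEps Q δ := by
  refine le_csInf ⟨∑ z, |pml Q z|, Finset.sum_nonneg fun z _ => abs_nonneg _, ?_⟩ ?_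
  · rw [Finset.filter_true_of_mem fun z _ =>
      (le_abs_self _).trans (Finset.single_le_sum (fun z _ => abs_nonneg (pml Q z))
        (Finset.mem_univ z)), hQ.sum_margY]
    linarith
  · rintro t ⟨-, ht⟩
    by_contra! hlt
    have hsub : Finset.univ.filter (fun z => pml Q z ≤ t) ⊆ Tᶜ := fun z hz =>
      Finset.mem_compl.mpr fun hzT => by
        have := (Finset.mem_filter.mp hz).2
        linarith [hT z hzT]
    have hle := Finset.sum_le_sum_of_subset_of_nonneg hsub fun z _ _ => hQ.margY_nonneg z
    have htot := Finset.sum_add_sum_compl T (margY Q)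
    rw [hQ.sum_margY] at htot
    linarith

variable [Fintype Y]

lemma ubarEps_le_pmlEnvelope {P : X → Y → ℝ} (hP : IsJoint P) (hPY : ∀ y, 0 < margY P y)
    {δ : ℝ} (hδ : 0 ≤ δ) {K : Y → Z → ℝ} (hK : IsKernel K) :
    ubarEps (pushKernel P K) δ ≤ pmlEnvelope P δ := by
  set C := 1 + ∑ y, (margY P y)⁻¹
  have hC : 1 ≤ C :=
    le_add_of_nonneg_right <| Finset.sum_nonneg fun y _ => (inv_pos.mpr (hPY y)).le
  set e := (Fintype.equivFin Z).symm
  have hKe : IsKernel fun y i => K y (e i) :=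
    ⟨fun y i => hK.1 y (e i), fun y => (e.sum_comp (K y)).trans (hK.2 y)⟩
  rw [← ubarEps_comp_equiv _ e]
  -- `sSup` needs the bound `log C`, valid for every post-processing by data processing
  refine le_csSup ⟨Real.log C, ?_⟩ ⟨_, _, hKe, rfl⟩
  rintro _ ⟨m, K', hK', rfl⟩
  have hQ := isJoint_pushKernel hP hK'
  exact ubarEps_le hQ hδ (Real.log_nonneg hC) <| pml_le_log hC hQ.1 <|
    pushKernel_le_mul_margY hK' (le_margX_mul_margY hP.1 hPY)

lemma le_pmlEnvelope {P : X → Y → ℝ} (hP : IsJoint P) (hPY : ∀ y, 0 < margY P y) {δ τ : ℝ}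
    (hδ : 0 ≤ δ) {K : Y → Z → ℝ} (hK : IsKernel K) (T : Finset Z)
    (hT : ∀ z ∈ T, τ ≤ pml (pushKernel P K) z)
    (hmass : δ < ∑ z ∈ T, margY (pushKernel P K) z) : τ ≤ pmlEnvelope P δ :=
  (le_ubarEps (isJoint_pushKernel hP hK) hδ T hT hmass).trans
    (ubarEps_le_pmlEnvelope hP hPY hδ hK)

end Quantile

section Resample

variable {ι X : Type} [Fintype ι] [DecidableEq ι]

def resampleKernel (y₀ : ι) (r : ι → ℝ) (y z : ι) : ℝ :=
  if y = y₀ then r z else if z = y then 1 else 0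

lemma isKernel_resampleKernel {y₀ : ι} {r : ι → ℝ} (hr : ∀ z, 0 ≤ r z) (hr1 : ∑ z, r z = 1) :
    IsKernel (resampleKernel y₀ r) := by
  refine ⟨fun y z => ?_, fun y => ?_⟩ <;> unfold resampleKernel
  · split_ifs <;> simp [hr]
  · split_ifs <;> simp [hr1]

lemma sum_mul_resampleKernel (y₀ : ι) (r g : ι → ℝ) (z : ι) :
    ∑ y, g y * resampleKernel y₀ r y z = g y₀ * r z + if z = y₀ then 0 else g z := by
  rw [Fintype.sum_eq_add_sum_compl y₀]
  simp only [resampleKernel, ↓reduceIte, mul_ite, mul_one, mul_zero, add_right_inj]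
  rw [Finset.sum_congr rfl fun i hi =>
    if_neg (Finset.mem_compl.mp hi <| Finset.mem_singleton.mpr ·), Finset.sum_ite_eq]
  simp [ite_not]

lemma pushKernel_resampleKernel (P : X → ι → ℝ) (y₀ : ι) (r : ι → ℝ) (x : X) (z : ι) :
    pushKernel P (resampleKernel y₀ r) x z = P x y₀ * r z + if z = y₀ then 0 else P x z :=
  sum_mul_resampleKernel y₀ r (P x) z

lemma margY_pushKernel_resampleKernel [Fintype X] (P : X → ι → ℝ) (y₀ : ι) (r : ι → ℝ) (z : ι) :
    margY (pushKernel P (resampleKernel y₀ r)) z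
      = margY P y₀ * r z + if z = y₀ then 0 else margY P z := by
  rw [margY_pushKernel, sum_mul_resampleKernel]

lemma sum_margY_pushKernel_resampleKernel [Fintype X] (P : X → ι → ℝ) {y₀ : ι} (r : ι → ℝ)
    {T : Finset ι} (hy₀ : y₀ ∉ T) :
    ∑ j ∈ T, margY (pushKernel P (resampleKernel y₀ r)) j
      = ∑ j ∈ T, margY P j + margY P y₀ * ∑ j ∈ T, r j := by
  rw [Finset.mul_sum, ← Finset.sum_add_distrib]
  refine Finset.sum_congr rfl fun j hj => ?_
  rw [margY_pushKernel_resampleKernel, if_neg (ne_of_mem_of_not_mem hj hy₀)]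
  ring

end Resample

section KRR

variable {ι : Type} [Fintype ι]

def krrJoint [DecidableEq ι] (p : ι → ℝ) (α β : ℝ) (x y : ι) : ℝ :=
  p x * if y = x then α else β

structure IsKRR (p q : ι → ℝ) (α β : ℝ) : Prop where
  beta_pos : 0 < β
  beta_lt_alpha : β < α
  alpha_add : α + (Fintype.card ι - 1) * β = 1
  prior_pos : ∀ i, 0 < p i
  sum_prior : ∑ i, p i = 1
  output_eq : ∀ j, q j = β + (α - β) * p j

namespace IsKRR

variable {p q : ι → ℝ} {α β : ℝ}

lemma margX_krrJoint [DecidableEq ι] (h : IsKRR p q α β) (x : ι) :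
    margX (krrJoint p α β) x = p x := by
  have hsum : ∑ y, (if y = x then α else β) = α + (Fintype.card ι - 1) * β := by
    simp_rw [show ∀ y, (if y = x then α else β) = β + if y = x then α - β else 0 from
      fun y => by split_ifs <;> ring]
    rw [Finset.sum_add_distrib, Finset.sum_ite_eq', if_pos (Finset.mem_univ x)]
    simp only [Finset.sum_const, Finset.card_univ, nsmul_eq_mul]
    ring
  calc ∑ y, krrJoint p α β x y = p x * ∑ y, (if y = x then α else β) := (Finset.mul_sum ..).symm
    _ = p x := by rw [hsum, h.alpha_add, mul_one]

lemma margY_krrJoint [DecidableEq ι] (h : IsKRR p q α β) (y : ι) :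
    margY (krrJoint p α β) y = q y := by
  simp_rw [margY, krrJoint, show ∀ x, p x * (if y = x then α else β)
      = β * p x + if x = y then (α - β) * p x else 0 from
    fun x => by
      by_cases hxy : x = y
      · subst hxy; simp only [if_true]; ring
      · simp only [hxy, Ne.symm hxy, if_false]; ring]
  rw [Finset.sum_add_distrib, ← Finset.mul_sum, h.sum_prior, Finset.sum_ite_eq',
    if_pos (Finset.mem_univ y), h.output_eq]
  ring

lemma isJoint [DecidableEq ι] (h : IsKRR p q α β) : IsJoint (krrJoint p α β) :=
  ⟨fun x y => mul_nonneg (h.prior_pos x).le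
      (by split_ifs <;> linarith [h.beta_pos, h.beta_lt_alpha]),
    (Finset.sum_congr rfl fun x _ => h.margX_krrJoint x).trans h.sum_prior⟩

lemma beta_lt_output (h : IsKRR p q α β) (j : ι) : β < q j := by
  rw [h.output_eq]
  nlinarith [h.prior_pos j, h.beta_lt_alpha]

lemma output_pos (h : IsKRR p q α β) (j : ι) : 0 < q j :=
  h.beta_pos.trans (h.beta_lt_output j)

lemma output_le_alpha (h : IsKRR p q α β) (j : ι) : q j ≤ α := by
  have hp1 : p j ≤ 1 := h.sum_prior ▸
    Finset.single_le_sum (fun i _ => (h.prior_pos i).le) (Finset.mem_univ j)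
  rw [h.output_eq]
  nlinarith [h.beta_lt_alpha]

lemma output_mono (h : IsKRR p q α β) {i j : ι} (hij : p i ≤ p j) : q i ≤ q j := by
  rw [h.output_eq, h.output_eq]
  nlinarith [h.beta_lt_alpha]

lemma sum_output [DecidableEq ι] (h : IsKRR p q α β) : ∑ j, q j = 1 := by
  simpa only [h.margY_krrJoint] using h.isJoint.sum_margY

lemma margY_pos [DecidableEq ι] (h : IsKRR p q α β) (y : ι) : 0 < margY (krrJoint p α β) y :=
  h.margY_krrJoint y ▸ h.output_pos y

lemma beta_lt_of_ratio_eq (h : IsKRR p q α β) {T : Finset ι} (hT : T.Nonempty) {y₀ : ι}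
    {G Λ : ℝ} (hG0 : 0 ≤ G) (hΛeq : Λ * (∑ j ∈ T, q j + G * q y₀) = T.card * α + G * β) :
    β < Λ * q y₀ := by
  have hS : ∑ j ∈ T, q j ≤ T.card * α := by
    simpa using Finset.sum_le_sum fun j (_ : j ∈ T) => h.output_le_alpha j
  have hSpos : 0 < ∑ j ∈ T, q j := Finset.sum_pos (fun j _ => h.output_pos j) hT
  by_contra! hle
  have h1 : 1 * ∑ j ∈ T, q j ≤ Λ * ∑ j ∈ T, q j := by
    nlinarith [mul_nonneg hG0 (sub_nonneg.mpr hle)]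
  have h2 : 1 ≤ Λ := le_of_mul_le_mul_right h1 hSpos
  nlinarith [h.beta_lt_output y₀, h.output_pos y₀]

end IsKRR

end KRR

lemma exists_equalizing_weights {ι : Type} [Fintype ι] [DecidableEq ι] {T : Finset ι} {y₀ : ι}
    (hy₀ : y₀ ∉ T) {q : ι → ℝ} {α β G Λ : ℝ} (hG1 : G ≤ 1) (hΛT : ∀ j ∈ T, Λ * q j ≤ α)
    (hΛ : β < Λ * q y₀) (hΛeq : Λ * (∑ j ∈ T, q j + G * q y₀) = T.card * α + G * β) :
    ∃ r : ι → ℝ, (∀ j, 0 ≤ r j) ∧ ∑ j, r j = 1 ∧ r y₀ = 1 - G ∧ ∑ j ∈ T, r j = G ∧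
      ∀ j ∈ T, α + r j * β = Λ * (q j + r j * q y₀) := by
  have hd : 0 < Λ * q y₀ - β := sub_pos.mpr hΛ
  set c : ι → ℝ := fun j => (α - Λ * q j) / (Λ * q y₀ - β)
  have hc : ∀ j, c j * (Λ * q y₀ - β) = α - Λ * q j := fun j => div_mul_cancel₀ _ hd.ne'
  have hcT : ∑ j ∈ T, c j = G := by
    rw [← Finset.sum_div, div_eq_iff hd.ne', Finset.sum_sub_distrib, ← Finset.mul_sum,
      Finset.sum_const, nsmul_eq_mul]
    linarith
  have hy₀T : ∀ j ∈ T, j ≠ y₀ := fun j hj => ne_of_mem_of_not_mem hj hy₀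
  refine ⟨fun j => (if j ∈ T then c j else 0) + if j = y₀ then 1 - G else 0,
    fun j => ?_, ?_, by simp [hy₀], ?_, fun j hj => ?_⟩
  · refine add_nonneg ?_ ?_ <;> split_ifs with hj
    exacts [div_nonneg (sub_nonneg.mpr (hΛT j hj)) hd.le, le_rfl, sub_nonneg.mpr hG1, le_rfl]
  · rw [Finset.sum_add_distrib, Finset.sum_ite_mem, Finset.univ_inter, hcT,
      Finset.sum_ite_eq', if_pos (Finset.mem_univ _)]
    ring
  · rw [← hcT]
    exact Finset.sum_congr rfl fun j hj => by simp [hj, hy₀T j hj]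
  · simp only [hj, if_true, hy₀T j hj, if_false, add_zero]
    linear_combination -(hc j)

namespace IsKRR

variable {ι : Type} [Fintype ι] [DecidableEq ι] {p q : ι → ℝ} {α β : ℝ}

lemma log_le_pml_resampleKernel (h : IsKRR p q α β) {y₀ z : ι} (hz : z ≠ y₀) {r : ι → ℝ}
    (hK : IsKernel (resampleKernel y₀ r)) :
    Real.log ((α + r z * β) / (q z + r z * q y₀))
      ≤ pml (pushKernel (krrJoint p α β) (resampleKernel y₀ r)) z := by
  have hcond : condYX (pushKernel (krrJoint p α β) (resampleKernel y₀ r)) z z = α + r z * β := by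
    rw [condYX, margX_pushKernel _ hK, h.margX_krrJoint,
      pushKernel_resampleKernel, if_neg hz]
    simp only [krrJoint, if_neg hz.symm, if_true]
    field_simp [(h.prior_pos z).ne']
    ring
  have hm : margY (pushKernel (krrJoint p α β) (resampleKernel y₀ r)) z = q z + r z * q y₀ := by
    rw [margY_pushKernel_resampleKernel, if_neg hz, h.margY_krrJoint, h.margY_krrJoint]
    ring
  have hβ := h.beta_pos
  have hα := h.beta_pos.trans h.beta_lt_alpha
  have hr : 0 ≤ r z := by simpa [resampleKernel] using hK.1 y₀ z
  have := h.output_pos z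
  have := h.output_pos y₀
  rw [← hcond, ← hm]
  exact log_div_le_pml (by rw [hcond]; positivity) (by rw [hm]; positivity)

lemma log_le_pml_resampleKernel_self (h : IsKRR p q α β) {y₀ : ι} {r : ι → ℝ}
    (hK : IsKernel (resampleKernel y₀ r)) (hpos : 0 < r y₀) :
    Real.log (α / q y₀) ≤ pml (pushKernel (krrJoint p α β) (resampleKernel y₀ r)) y₀ := by
  have hcond : condYX (pushKernel (krrJoint p α β) (resampleKernel y₀ r)) y₀ y₀ = α * r y₀ := by
    rw [condYX, margX_pushKernel _ hK, h.margX_krrJoint,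
      pushKernel_resampleKernel, if_pos rfl]
    simp only [krrJoint, if_true, add_zero]
    field_simp [(h.prior_pos y₀).ne']
  have hm : margY (pushKernel (krrJoint p α β) (resampleKernel y₀ r)) y₀ = q y₀ * r y₀ := by
    rw [margY_pushKernel_resampleKernel, if_pos rfl, h.margY_krrJoint, add_zero]
  have hα := h.beta_pos.trans h.beta_lt_alpha
  have hq := h.output_pos y₀
  have := log_div_le_pml (by rw [hcond]; positivity) (by rw [hm]; positivity)
  rwa [hcond, hm, mul_div_mul_right _ _ hpos.ne'] at this

lemma exists_equalizing_kernel (h : IsKRR p q α β) {T : Finset ι} (hT : T.Nonempty) {y₀ : ι}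
    (hy₀ : y₀ ∉ T) {G Λ : ℝ} (hG0 : 0 ≤ G) (hG1 : G ≤ 1) (hΛT : ∀ j ∈ T, Λ * q j ≤ α)
    (hΛeq : Λ * (∑ j ∈ T, q j + G * q y₀) = T.card * α + G * β) :
    ∃ r : ι → ℝ, IsKernel (resampleKernel y₀ r) ∧ r y₀ = 1 - G ∧
      (∀ j ∈ T, Real.log Λ ≤ pml (pushKernel (krrJoint p α β) (resampleKernel y₀ r)) j) ∧
      ∑ j ∈ T, margY (pushKernel (krrJoint p α β) (resampleKernel y₀ r)) j
        = ∑ j ∈ T, q j + G * q y₀ := by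
  obtain ⟨r, hr, hr1, hry₀, hrT, hratio⟩ := exists_equalizing_weights hy₀ hG1 hΛT
    (h.beta_lt_of_ratio_eq hT hG0 hΛeq) hΛeq
  have hK := isKernel_resampleKernel (y₀ := y₀) hr hr1
  refine ⟨r, hK, hry₀, fun j hj => ?_, ?_⟩
  · have hm : 0 < q j + r j * q y₀ := by
      have := h.output_pos j; have := h.output_pos y₀; have := hr j; positivity
    have := h.log_le_pml_resampleKernel (ne_of_mem_of_not_mem hj hy₀) hK
    rwa [hratio j hj, mul_div_assoc, div_self hm.ne', mul_one] at this
  · simp only [sum_margY_pushKernel_resampleKernel _ r hy₀, h.margY_krrJoint, hrT]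
    ring

lemma log_le_pmlEnvelope_spread (h : IsKRR p q α β) {T : Finset ι} (hT : T.Nonempty) {y₀ : ι}
    (hy₀ : y₀ ∉ T) {G Λ : ℝ} (hG0 : 0 ≤ G) (hG1 : G ≤ 1) (hΛT : ∀ j ∈ T, Λ * q j ≤ α)
    (hΛeq : Λ * (∑ j ∈ T, q j + G * q y₀) = T.card * α + G * β) {δ : ℝ} (hδ0 : 0 ≤ δ)
    (hδ : δ < ∑ j ∈ T, q j + G * q y₀) :
    Real.log Λ ≤ pmlEnvelope (krrJoint p α β) δ := by
  obtain ⟨r, hK, -, hpml, hmass⟩ := h.exists_equalizing_kernel hT hy₀ hG0 hG1 hΛT hΛeq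
  exact le_pmlEnvelope h.isJoint h.margY_pos hδ0 hK T hpml (hmass ▸ hδ)

lemma log_le_pmlEnvelope_spread_insert (h : IsKRR p q α β) {T : Finset ι} (hT : T.Nonempty)
    {y₀ : ι} (hy₀ : y₀ ∉ T) {G Λ : ℝ} (hG0 : 0 ≤ G) (hG1 : G < 1)
    (hΛT : ∀ j ∈ T, Λ * q j ≤ α) (hΛy₀ : Λ * q y₀ ≤ α)
    (hΛeq : Λ * (∑ j ∈ T, q j + G * q y₀) = T.card * α + G * β) {δ : ℝ} (hδ0 : 0 ≤ δ)
    (hδ : δ < ∑ j ∈ T, q j + q y₀) :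
    Real.log Λ ≤ pmlEnvelope (krrJoint p α β) δ := by
  obtain ⟨r, hK, hry₀, hpml, hmass⟩ := h.exists_equalizing_kernel hT hy₀ hG0 hG1.le hΛT hΛeq
  refine le_pmlEnvelope h.isJoint h.margY_pos hδ0 hK (insert y₀ T) ?_ ?_
  · have hq := h.output_pos y₀
    have hΛ : 0 < Λ := by
      have := h.beta_lt_of_ratio_eq hT hG0 hΛeq
      nlinarith [h.beta_pos]
    refine Finset.forall_mem_insert _ _ _ |>.mpr ⟨?_, hpml⟩
    refine (Real.log_le_log hΛ ((le_div_iff₀ hq).mpr hΛy₀)).trans ?_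
    exact h.log_le_pml_resampleKernel_self hK (by linarith)
  · rw [Finset.sum_insert hy₀, hmass, margY_pushKernel_resampleKernel, if_pos rfl, hry₀,
      h.margY_krrJoint]
    linarith

lemma log_le_pmlEnvelope_merge (h : IsKRR p q α β) {T : Finset ι} {y₁ y₀ : ι} (hy₁ : y₁ ∈ T)
    (hy₀ : y₀ ∉ T) (hqT : ∀ j ∈ T, q j ≤ q y₁) (hq₁₀ : q y₁ ≤ q y₀) {σ : ℝ} (hσ0 : 0 < σ)
    (hσ1 : σ ≤ 1) {δ : ℝ} (hδ0 : 0 ≤ δ) (hδ : δ ≤ ∑ j ∈ T, q j) :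
    Real.log ((α + σ * β) / (q y₁ + σ * q y₀)) ≤ pmlEnvelope (krrJoint p α β) δ := by
  have hy₁₀ : y₁ ≠ y₀ := ne_of_mem_of_not_mem hy₁ hy₀
  set r : ι → ℝ := fun j => (if j = y₁ then σ else 0) + if j = y₀ then 1 - σ else 0
  have hK : IsKernel (resampleKernel y₀ r) := by
    refine isKernel_resampleKernel (fun j => add_nonneg ?_ ?_) ?_
    · split_ifs <;> linarith
    · split_ifs <;> linarith
    · simp only [r, Finset.sum_add_distrib, Finset.sum_ite_eq', Finset.mem_univ, if_true]
      ring
  have hβ := h.beta_pos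
  have hα := h.beta_pos.trans h.beta_lt_alpha
  have hq₁ := h.output_pos y₁
  have hq₀ := h.output_pos y₀
  refine le_pmlEnvelope h.isJoint h.margY_pos hδ0 hK T (fun j hj => ?_) ?_
  · have hj₀ : j ≠ y₀ := ne_of_mem_of_not_mem hj hy₀
    have hpml := h.log_le_pml_resampleKernel hj₀ hK
    by_cases hj₁ : j = y₁
    · subst hj₁
      simpa [r, hj₀] using hpml
    · simp only [r, hj₁, hj₀, if_false, add_zero, zero_mul] at hpml
      refine (Real.log_le_log (by positivity) ?_).trans hpml
      rw [div_le_div_iff₀ (by positivity) (h.output_pos j)]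
      have hqj := h.output_pos j
      have h₁ : α * q j ≤ α * q y₁ := mul_le_mul_of_nonneg_left (hqT j hj) hα.le
      have h₂ : σ * (β * q j) ≤ σ * (α * q y₀) := mul_le_mul_of_nonneg_left
        (mul_le_mul h.beta_lt_alpha.le ((hqT j hj).trans hq₁₀) hqj.le hα.le) hσ0.le
      nlinarith
  · rw [sum_margY_pushKernel_resampleKernel _ r hy₀, Finset.sum_congr rfl fun j _ =>
      h.margY_krrJoint j, h.margY_krrJoint]
    have : ∑ j ∈ T, r j = σ := by
      rw [Finset.sum_add_distrib, Finset.sum_ite_eq', Finset.sum_ite_eq', if_pos hy₁,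
        if_neg hy₀, add_zero]
    rw [this]
    nlinarith

end IsKRR

lemma le_of_forall_Ioc_le {f : ℝ → ℝ} {a b E : ℝ} (hab : a < b)
    (hf : ContinuousWithinAt f (Set.Ioi a) a) (h : ∀ x ∈ Set.Ioc a b, f x ≤ E) : f a ≤ E :=
  le_of_tendsto hf (Filter.eventually_of_mem (Ioc_mem_nhdsGT hab) h)

lemma ite_eq_clamp {g : ℝ → ℝ} {θ θ₁ θ₂ : ℝ} (h12 : θ₁ ≤ θ₂) :
    (if θ ≤ θ₁ then g θ₁ else if θ ≤ θ₂ then g θ else g θ₂) = g (max θ₁ (min θ θ₂)) := by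
  split_ifs with h1 h2
  · rw [min_eq_left (h1.trans h12), max_eq_left h1]
  · rw [min_eq_left h2, max_eq_right (le_of_not_ge h1)]
  · rw [min_eq_right (le_of_not_ge h2), max_eq_right h12]

lemma sum_range_le_mul {q : ℕ → ℝ} {n : ℕ} {u : ℝ} (hq : ∀ j < n, q j ≤ u) :
    ∑ j ∈ range n, q j ≤ n * u := by
  simpa using Finset.sum_le_card_nsmul _ _ u fun j hj => hq j (mem_range.mp hj)

lemma sum_Iio_fin_mk {k n : ℕ} (hn : n < k) (f : ℕ → ℝ) :
    ∑ j ∈ Iio (⟨n, hn⟩ : Fin k), f j = ∑ j ∈ range n, f j := by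
  have := Fin.map_valEmbedding_Iio (⟨n, hn⟩ : Fin k)
  rw [← Nat.Iio_eq_range, ← this, Finset.sum_map]
  rfl

/-- `Λ(G)`: the common ratio `P_{Z|X=j}(j) / P_Z(j)`, `j < n`, after a fraction `G` of output `n`
has been spread over the outputs `0, …, n - 1`. -/
def krrRatio (q : ℕ → ℝ) (α β : ℝ) (n : ℕ) (G : ℝ) : ℝ :=
  (n * α + G * β) / (∑ j ∈ range n, q j + G * q n)

/-- The `G` with `krrRatio q α β n G * u = α`; the paper's `θ₁` and `θ₂` are the thresholds at
`u = q (n - 1)` and `u = q n`. -/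
def krrThreshold (q : ℕ → ℝ) (α β : ℝ) (n : ℕ) (u : ℝ) : ℝ :=
  α * (n * u - ∑ j ∈ range n, q j) / (α * q n - β * u)

section Threshold

variable {q : ℕ → ℝ} {α β : ℝ} {n : ℕ}

lemma continuousAt_krrRatio {G : ℝ} (hden : ∑ j ∈ range n, q j + G * q n ≠ 0) :
    ContinuousAt (krrRatio q α β n) G :=
  ContinuousAt.div (by fun_prop) (by fun_prop) hden

lemma krrThreshold_nonneg {u : ℝ} (hα : 0 ≤ α) (hd : 0 < α * q n - β * u)
    (hu : ∑ j ∈ range n, q j ≤ n * u) : 0 ≤ krrThreshold q α β n u :=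
  div_nonneg (mul_nonneg hα (sub_nonneg.mpr hu)) hd.le

lemma krrRatio_mul_le_iff {u G : ℝ} (hd : 0 < α * q n - β * u)
    (hden : 0 < ∑ j ∈ range n, q j + G * q n) :
    krrRatio q α β n G * u ≤ α ↔ krrThreshold q α β n u ≤ G := by
  rw [krrRatio, krrThreshold, div_mul_eq_mul_div, div_le_iff₀ hden, div_le_iff₀ hd]
  constructor <;> intro h <;> linarith

lemma krrRatio_krrThreshold {u : ℝ} (hu : u ≠ 0) (hd : 0 < α * q n - β * u)
    (hden : ∑ j ∈ range n, q j + krrThreshold q α β n u * q n ≠ 0) :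
    krrRatio q α β n (krrThreshold q α β n u) = α / u := by
  have ht : krrThreshold q α β n u * (α * q n - β * u) = α * (n * u - ∑ j ∈ range n, q j) :=
    div_mul_cancel₀ _ hd.ne'
  rw [krrRatio, div_eq_div_iff hden hu]
  linear_combination -ht

lemma krrThreshold_le_one_of_prior {p : ℕ → ℝ}
    (hq : ∀ j, q j = β + (α - β) * p j) (hβ : 0 < β) (hβα : β < α) (hn : 1 ≤ n) (hp : 0 ≤ p n)
    (hprior : p n ≤ (α * ∑ j ∈ range n, p j + β) / ((n - 1) * α + β)) :
    krrThreshold q α β n (q n) ≤ 1 := by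
  have hn' : (1 : ℝ) ≤ n := by exact_mod_cast hn
  have hd : 0 < α * q n - β * q n := by
    rw [← sub_mul, hq n]
    exact mul_pos (sub_pos.mpr hβα) (by nlinarith)
  have hprior' := (le_div_iff₀ (by nlinarith)).mp hprior
  have hS : ∑ j ∈ range n, q j = n * β + (α - β) * ∑ j ∈ range n, p j := by
    simp [hq, Finset.sum_add_distrib, Finset.mul_sum]
  rw [krrThreshold, div_le_one hd, hS, hq n]
  nlinarith [mul_le_mul_of_nonneg_left hprior' (sub_nonneg.mpr hβα.le)]

end Threshold

section FinKRR

variable {k n : ℕ} {p q : ℕ → ℝ} {α β δ : ℝ}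

lemma isKRR_of_exp {εr : ℝ} (hεr : 0 < εr) (hp : ∀ i, i < k → 0 < p i)
    (hpsum : ∑ i ∈ range k, p i = 1) (hα : α = Real.exp εr / (Real.exp εr + k - 1))
    (hβ : β = 1 / (Real.exp εr + k - 1)) (hq : ∀ j, q j = β + (α - β) * p j) :
    IsKRR (fun i : Fin k => p i) (fun j : Fin k => q j) α β := by
  have hexp : 1 < Real.exp εr := Real.one_lt_exp_iff.mpr hεr
  have hden : 0 < Real.exp εr + k - 1 := by have : (0 : ℝ) ≤ k := k.cast_nonneg; linarith
  refine ⟨?_, ?_, ?_, fun i => hp i i.isLt, ?_, fun j => hq j⟩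
  · rw [hβ]; positivity
  · rw [hα, hβ]; exact div_lt_div_of_pos_right hexp hden
  · rw [hα, hβ, Fintype.card_fin]; field_simp; ring
  · rw [Fin.sum_univ_eq_sum_range (fun i => p i)]; exact hpsum

lemma IsKRR.sum_range_pos (h : IsKRR (fun i : Fin k => p i) (fun j : Fin k => q j) α β)
    (hn : 1 ≤ n) (hnk : n ≤ k) : 0 < ∑ j ∈ range n, q j :=
  Finset.sum_pos (fun j hj => h.output_pos ⟨j, (mem_range.mp hj).trans_le hnk⟩)
    (nonempty_range_iff.mpr (by omega))

lemma IsKRR.krrRatio_mul_sum_Iio (h : IsKRR (fun i : Fin k => p i) (fun j : Fin k => q j) α β)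
    (hn : 1 ≤ n) (hnk : n < k) {G : ℝ} (hG0 : 0 ≤ G) :
    krrRatio q α β n G * (∑ j ∈ Iio (⟨n, hnk⟩ : Fin k), q j + G * q n)
      = #(Iio (⟨n, hnk⟩ : Fin k)) * α + G * β := by
  rw [sum_Iio_fin_mk, Fin.card_Iio]
  exact div_mul_cancel₀ _ (add_pos_of_pos_of_nonneg (h.sum_range_pos hn hnk.le)
    (mul_nonneg hG0 (h.output_pos ⟨n, hnk⟩).le)).ne'

lemma IsKRR.krrRatio_mul_le_of_mem_Iio
    (h : IsKRR (fun i : Fin k => p i) (fun j : Fin k => q j) α β)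
    (hqmono : ∀ i j, i ≤ j → j < k → q i ≤ q j) (hnk : n < k) {G : ℝ} (hG0 : 0 ≤ G)
    (hGa : krrRatio q α β n G * q (n - 1) ≤ α) {j : Fin k} (hj : j ∈ Iio ⟨n, hnk⟩) :
    krrRatio q α β n G * q j ≤ α := by
  have hjn : j.val < n := Fin.lt_def.mp (Finset.mem_Iio.mp hj)
  have hΛ : 0 ≤ krrRatio q α β n G :=
    div_nonneg (add_nonneg (mul_nonneg n.cast_nonneg (h.beta_pos.trans h.beta_lt_alpha).le)
      (mul_nonneg hG0 h.beta_pos.le)) (add_nonneg (Finset.sum_nonneg fun i hi =>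
        (h.output_pos ⟨i, (mem_range.mp hi).trans hnk⟩).le)
          (mul_nonneg hG0 (h.output_pos ⟨n, hnk⟩).le))
  exact (mul_le_mul_of_nonneg_left (hqmono j (n - 1) (by omega) (by omega)) hΛ).trans hGa

lemma log_krrRatio_le_pmlEnvelope (h : IsKRR (fun i : Fin k => p i) (fun j : Fin k => q j) α β)
    (hqmono : ∀ i j, i ≤ j → j < k → q i ≤ q j) (hn : 1 ≤ n) (hnk : n < k) {G : ℝ}
    (hG0 : 0 ≤ G) (hG1 : G ≤ 1) (hGa : krrRatio q α β n G * q (n - 1) ≤ α) (hδ0 : 0 ≤ δ)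
    (hδ : δ < ∑ j ∈ range n, q j + G * q n) :
    Real.log (krrRatio q α β n G) ≤ pmlEnvelope (krrJoint (fun i : Fin k => p i) α β) δ :=
  h.log_le_pmlEnvelope_spread ⟨⟨0, by omega⟩, mem_Iio.mpr (Fin.mk_lt_mk.mpr (by omega))⟩
    notMem_Iio_self hG0 hG1 (fun _ => h.krrRatio_mul_le_of_mem_Iio hqmono hnk hG0 hGa)
    (h.krrRatio_mul_sum_Iio hn hnk hG0) hδ0 (by rwa [sum_Iio_fin_mk])

lemma log_krrRatio_le_pmlEnvelope_of_lt_one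
    (h : IsKRR (fun i : Fin k => p i) (fun j : Fin k => q j) α β)
    (hqmono : ∀ i j, i ≤ j → j < k → q i ≤ q j) (hn : 1 ≤ n) (hnk : n < k) {G : ℝ}
    (hG0 : 0 ≤ G) (hG1 : G < 1) (hGa : krrRatio q α β n G * q (n - 1) ≤ α)
    (hGb : krrRatio q α β n G * q n ≤ α) (hδ0 : 0 ≤ δ) (hδ : δ < ∑ j ∈ range n, q j + q n) :
    Real.log (krrRatio q α β n G) ≤ pmlEnvelope (krrJoint (fun i : Fin k => p i) α β) δ :=
  h.log_le_pmlEnvelope_spread_insert ⟨⟨0, by omega⟩, mem_Iio.mpr (Fin.mk_lt_mk.mpr (by omega))⟩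
    notMem_Iio_self hG0 hG1 (fun _ => h.krrRatio_mul_le_of_mem_Iio hqmono hnk hG0 hGa) hGb
    (h.krrRatio_mul_sum_Iio hn hnk hG0) hδ0 (by rwa [sum_Iio_fin_mk])

lemma log_krrRatio_le_pmlEnvelope_of_forall
    (h : IsKRR (fun i : Fin k => p i) (fun j : Fin k => q j) α β)
    (hqmono : ∀ i j, i ≤ j → j < k → q i ≤ q j) (hn : 1 ≤ n) (hnk : n < k) {θ : ℝ}
    (hθ0 : 0 ≤ θ) (hθ1 : θ < 1) (hGa : ∀ G ∈ Set.Ioc θ 1, krrRatio q α β n G * q (n - 1) ≤ α)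
    (hδ0 : 0 ≤ δ) (hδ : δ = ∑ j ∈ range n, q j + θ * q n) :
    Real.log (krrRatio q α β n θ) ≤ pmlEnvelope (krrJoint (fun i : Fin k => p i) α β) δ := by
  have hqn := h.output_pos ⟨n, hnk⟩
  have hden : 0 < ∑ j ∈ range n, q j + θ * q n :=
    add_pos_of_pos_of_nonneg (h.sum_range_pos hn hnk.le) (mul_nonneg hθ0 hqn.le)
  have hΛ : 0 < krrRatio q α β n θ := div_pos (add_pos_of_pos_of_nonneg (mul_pos
    (by exact_mod_cast hn) (h.beta_pos.trans h.beta_lt_alpha)) (mul_nonneg hθ0 h.beta_pos.le)) hden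
  refine le_of_forall_Ioc_le (f := fun G => Real.log (krrRatio q α β n G)) hθ1
    ((continuousAt_krrRatio hden.ne').log hΛ.ne').continuousWithinAt fun G hG => ?_
  refine log_krrRatio_le_pmlEnvelope h hqmono hn hnk (hθ0.trans hG.1.le) hG.2 (hGa G hG) hδ0 ?_
  rw [hδ]
  linarith [mul_lt_mul_of_pos_right hG.1 hqn]

lemma log_alpha_div_le_pmlEnvelope (h : IsKRR (fun i : Fin k => p i) (fun j : Fin k => q j) α β)
    (hqmono : ∀ i j, i ≤ j → j < k → q i ≤ q j) (hnk : n + 1 < k) (hδ0 : 0 ≤ δ)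
    (hδ : δ ≤ ∑ j ∈ range (n + 1), q j) :
    Real.log (α / q n) ≤ pmlEnvelope (krrJoint (fun i : Fin k => p i) α β) δ := by
  have hqn := h.output_pos ⟨n, by omega⟩
  have hqn1 := h.output_pos ⟨n + 1, hnk⟩
  have hα := h.beta_pos.trans h.beta_lt_alpha
  have hf : ContinuousAt (fun σ => Real.log ((α + σ * β) / (q n + σ * q (n + 1)))) 0 :=
    ContinuousAt.log (ContinuousAt.div (by fun_prop) (by fun_prop) (by simpa using hqn.ne'))
      (by simpa using (div_pos hα hqn).ne')
  have := le_of_forall_Ioc_le one_pos hf.continuousWithinAt fun σ hσ =>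
    h.log_le_pmlEnvelope_merge (T := Iio ⟨n + 1, hnk⟩) (y₁ := ⟨n, by omega⟩)
      (y₀ := ⟨n + 1, hnk⟩) (by simp [Fin.lt_def]) notMem_Iio_self
      (fun j hj => hqmono j n (Nat.lt_succ_iff.mp (Fin.lt_def.mp (mem_Iio.mp hj))) (by omega))
      (hqmono n (n + 1) (by omega) hnk) hσ.1 hσ.2 hδ0 (by simpa [sum_Iio_fin_mk] using hδ)
  simpa using this

lemma log_krrRatio_clamp_le_pmlEnvelope
    (h : IsKRR (fun i : Fin k => p i) (fun j : Fin k => q j) α β)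
    (hqmono : ∀ i j, i ≤ j → j < k → q i ≤ q j) (hn : 1 ≤ n) (hnk : n < k) (hδ1 : δ < 1)
    {θ θ₁ θ₂ : ℝ} (hθ0 : 0 < θ) (hθ1 : θ ≤ 1) (hδ : δ = ∑ j ∈ range n, q j + θ * q n)
    (hθ₁0 : 0 ≤ θ₁) (h12 : θ₁ ≤ θ₂) (hθ₂1 : θ₂ ≤ 1)
    (hle₁ : ∀ G, 0 ≤ G → (krrRatio q α β n G * q (n - 1) ≤ α ↔ θ₁ ≤ G))
    (hle₂ : ∀ G, 0 ≤ G → (krrRatio q α β n G * q n ≤ α ↔ θ₂ ≤ G))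
    (hθ₂ : krrRatio q α β n θ₂ = α / q n) :
    Real.log (krrRatio q α β n (max θ₁ (min θ θ₂)))
      ≤ pmlEnvelope (krrJoint (fun i : Fin k => p i) α β) δ := by
  have hqn : 0 < q n := h.output_pos ⟨n, hnk⟩
  have hθ₂0 := hθ₁0.trans h12
  have hδ0 : 0 ≤ δ := hδ ▸ add_nonneg (h.sum_range_pos hn hnk.le).le (by positivity)
  rcases hθ1.lt_or_eq with hθ1 | rfl
  · rcases lt_or_ge θ θ₁ with hθθ₁ | hθ₁θ
    · rw [max_eq_left ((min_le_left _ _).trans hθθ₁.le)]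
      refine log_krrRatio_le_pmlEnvelope h hqmono hn hnk hθ₁0 (h12.trans hθ₂1)
        ((hle₁ θ₁ hθ₁0).mpr le_rfl) hδ0 ?_
      linarith [mul_lt_mul_of_pos_right hθθ₁ hqn]
    rcases le_or_gt θ θ₂ with hθθ₂ | hθ₂θ
    · rw [min_eq_left hθθ₂, max_eq_right hθ₁θ]
      exact log_krrRatio_le_pmlEnvelope_of_forall h hqmono hn hnk hθ0.le hθ1
        (fun G hG => (hle₁ G (hθ0.le.trans hG.1.le)).mpr (hθ₁θ.trans hG.1.le)) hδ0 hδ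
    · rw [min_eq_right hθ₂θ.le, max_eq_right h12]
      refine log_krrRatio_le_pmlEnvelope_of_lt_one h hqmono hn hnk hθ₂0 (hθ₂θ.trans hθ1)
        ((hle₁ θ₂ hθ₂0).mpr h12) ((hle₂ θ₂ hθ₂0).mpr le_rfl) hδ0 ?_
      linarith [mul_lt_mul_of_pos_right hθ1 hqn]
  · rw [min_eq_right hθ₂1, max_eq_right h12, hθ₂]
    have hnk1 : n + 1 < k := by
      by_contra! hk
      have : ∑ j ∈ range k, q j = 1 := by
        simpa [Fin.sum_univ_eq_sum_range (fun j => q j)] using h.sum_output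
      rw [show k = n + 1 by omega, sum_range_succ] at this
      linarith
    exact log_alpha_div_le_pmlEnvelope h hqmono hnk1 hδ0 (by rw [sum_range_succ, hδ, one_mul])

lemma log_krr_bound_le_pmlEnvelope {θ : ℝ}
    (h : IsKRR (fun i : Fin k => p i) (fun j : Fin k => q j) α β)
    (hqmono : ∀ i j, i ≤ j → j < k → q i ≤ q j) (hn : 1 ≤ n) (hnk : n < k) (hδ1 : δ < 1)
    (hNl : ∑ j ∈ range n, q j < δ) (hNu : δ ≤ ∑ j ∈ range n, q j + q n)
    (hθ : θ = (δ - ∑ j ∈ range n, q j) / q n) (hθ₂1 : krrThreshold q α β n (q n) ≤ 1) :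
    (if θ ≤ krrThreshold q α β n (q (n - 1)) then Real.log (α / q (n - 1))
      else if θ ≤ krrThreshold q α β n (q n) then Real.log ((n * α + θ * β) / δ)
      else Real.log (α / q n))
      ≤ pmlEnvelope (krrJoint (fun i : Fin k => p i) α β) δ := by
  have hα := h.beta_pos.trans h.beta_lt_alpha
  have hqn : 0 < q n := h.output_pos ⟨n, hnk⟩
  have hqn1 : 0 < q (n - 1) := h.output_pos ⟨n - 1, by omega⟩
  have hqmn := hqmono (n - 1) n (by omega) hnk
  have hd₁ : 0 < α * q n - β * q (n - 1) := by
    nlinarith [mul_lt_mul_of_pos_right h.beta_lt_alpha hqn1, mul_le_mul_of_nonneg_left hqmn hα.le]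
  have hd₂ : 0 < α * q n - β * q n := by nlinarith [h.beta_lt_alpha]
  have hθ₁0 := krrThreshold_nonneg hα.le hd₁ (sum_range_le_mul fun j hj =>
    hqmono j (n - 1) (by omega) (by omega))
  have hθ₂0 := krrThreshold_nonneg hα.le hd₂ (sum_range_le_mul fun j hj =>
    hqmono j n hj.le hnk)
  have hden : ∀ G, 0 ≤ G → 0 < ∑ j ∈ range n, q j + G * q n := fun G hG =>
    add_pos_of_pos_of_nonneg (h.sum_range_pos hn hnk.le) (mul_nonneg hG hqn.le)
  have hθ₁ := krrRatio_krrThreshold hqn1.ne' hd₁ (hden _ hθ₁0).ne'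
  have hθ₂ := krrRatio_krrThreshold hqn.ne' hd₂ (hden _ hθ₂0).ne'
  have h12 : krrThreshold q α β n (q (n - 1)) ≤ krrThreshold q α β n (q n) :=
    (krrRatio_mul_le_iff hd₁ (hden _ hθ₂0)).mp <| (mul_le_mul_of_nonneg_left hqmn
      (hθ₂ ▸ (div_pos hα hqn).le)).trans (by rw [hθ₂, div_mul_cancel₀ _ hqn.ne'])
  have hδ : δ = ∑ j ∈ range n, q j + θ * q n := by rw [hθ]; field_simp; ring
  rw [← hθ₁, ← hθ₂, show (n * α + θ * β) / δ = krrRatio q α β n θ by rw [krrRatio, hδ],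
    ite_eq_clamp (g := fun G => Real.log (krrRatio q α β n G)) h12]
  exact log_krrRatio_clamp_le_pmlEnvelope h hqmono hn hnk hδ1
    (hθ ▸ div_pos (sub_pos.mpr hNl) hqn) (by rw [hθ, div_le_one hqn]; linarith) hδ hθ₁0 h12 hθ₂1
    (fun G hG => krrRatio_mul_le_iff hd₁ (hden G hG))
    (fun G hG => krrRatio_mul_le_iff hd₂ (hden G hG)) hθ₂

end FinKRR

theorem pmlEnvelope_krr_lower_bound_general
    (k : ℕ) (εr : ℝ) (hεr : 0 < εr)
    (p : ℕ → ℝ) (hp : ∀ i, i < k → 0 < p i)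
    (hpsum : ∑ i ∈ Finset.range k, p i = 1)
    (hmono : ∀ i j, i ≤ j → j < k → p i ≤ p j)
    (α β : ℝ)
    (hα : α = Real.exp εr / (Real.exp εr + k - 1))
    (hβ : β = 1 / (Real.exp εr + k - 1))
    (q : ℕ → ℝ) (hq : ∀ j, q j = β + (α - β) * p j)
    (δ : ℝ) (hδu : δ < 1)
    (N : ℕ) (hN2 : 2 ≤ N) (hNk : N ≤ k)
    (hNl : ∑ j ∈ Finset.range (N - 1), q j < δ)
    (hNu : δ ≤ ∑ j ∈ Finset.range N, q j)
    (θ : ℝ) (hθ : θ = (δ - ∑ j ∈ Finset.range (N - 1), q j) / q (N - 1))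
    (hprior : p (N - 1) ≤
      (α * ∑ j ∈ Finset.range (N - 1), p j + β) / (((N : ℝ) - 2) * α + β))
    (θ₁ θ₂ : ℝ)
    (hθ₁ : θ₁ = α * (((N : ℝ) - 2) * q (N - 2) - ∑ j ∈ Finset.range (N - 2), q j)
        / (α * q (N - 1) - β * q (N - 2)))
    (hθ₂ : θ₂ = α * (((N : ℝ) - 1) * q (N - 1) - ∑ j ∈ Finset.range (N - 1), q j)
        / (q (N - 1) * (α - β))) :
    (if θ ≤ θ₁ then Real.log (α / q (N - 2))
      else if θ ≤ θ₂ then Real.log ((((N : ℝ) - 1) * α + θ * β) / δ)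
      else Real.log (α / q (N - 1)))
      ≤ pmlEnvelope (fun i j : Fin k => p i.val * (if j = i then α else β)) δ := by
  obtain ⟨n, rfl⟩ : ∃ n, N = n + 1 := ⟨N - 1, by omega⟩
  have h := isKRR_of_exp hεr hp hpsum hα hβ hq
  have hqmono : ∀ i j, i ≤ j → j < k → q i ≤ q j := fun i j hij hj =>
    h.output_mono (i := ⟨i, hij.trans_lt hj⟩) (j := ⟨j, hj⟩) (hmono i j hij hj)
  have hcast : ((n + 1 : ℕ) : ℝ) - 1 = n := by push_cast; ring
  rw [Nat.add_sub_cancel] at hNl hθ hθ₂ hprior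
  rw [sum_range_succ] at hNu
  have hθ₁' : θ₁ = krrThreshold q α β n (q (n - 1)) := by
    obtain ⟨m, rfl⟩ : ∃ m, n = m + 1 := ⟨n - 1, by omega⟩
    rw [hθ₁, krrThreshold, sum_range_succ]
    push_cast
    ring_nf
  have hθ₂' : θ₂ = krrThreshold q α β n (q n) := by
    rw [hθ₂, krrThreshold, hcast]
    ring_nf
  subst hθ₁' hθ₂'
  rw [Nat.add_sub_cancel, show n + 1 - 2 = n - 1 by omega, hcast]
  exact log_krr_bound_le_pmlEnvelope h hqmono (by omega) (by omega) hδu hNl hNu hθ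
    (krrThreshold_le_one_of_prior hq h.beta_pos h.beta_lt_alpha (by omega) (hp n (by omega)).le
      (by rwa [show ((n + 1 : ℕ) : ℝ) - 2 = n - 1 by push_cast; ring] at hprior))

/-- Lower bound on the PML envelope of the `k`-randomized response
mechanism. The prior `p` and the output marginal `q` are indexed by `ℕ`, with index
`j ∈ {0, …, k-1}` corresponding to the paper's index `j+1 ∈ {1, …, k}`; thus the paper's
`q_N` is `q (N-1)`, its `q_{N-1}` is `q (N-2)`, and `Σ_{j=1}^{N-1} q_j` is
`∑ j ∈ Finset.range (N-1), q j`. Under the stated prior condition, for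
`δ ∈ (q₁, 1)` with `Σ_{j=1}^{N-1} q_j < δ ≤ Σ_{j=1}^{N} q_j` and
`θ = (δ - Σ_{j=1}^{N-1} q_j)/q_N`, the PML envelope satisfies `ε_c(δ) ≥ h_δ(θ)`. -/
theorem pmlEnvelope_krr_lower_bound
    (k : ℕ) (hk : 2 ≤ k) (εr : ℝ) (hεr : 0 < εr)
    (p : ℕ → ℝ) (hp : ∀ i, i < k → 0 < p i)
    (hpsum : ∑ i ∈ Finset.range k, p i = 1)
    (hmono : ∀ i j, i ≤ j → j < k → p i ≤ p j)
    (α β : ℝ)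
    (hα : α = Real.exp εr / (Real.exp εr + k - 1))
    (hβ : β = 1 / (Real.exp εr + k - 1))
    (q : ℕ → ℝ) (hq : ∀ j, q j = β + (α - β) * p j)
    (δ : ℝ) (hδl : q 0 < δ) (hδu : δ < 1)
    (N : ℕ) (hN2 : 2 ≤ N) (hNk : N ≤ k)
    (hNl : ∑ j ∈ Finset.range (N - 1), q j < δ)
    (hNu : δ ≤ ∑ j ∈ Finset.range N, q j)
    (θ : ℝ) (hθ : θ = (δ - ∑ j ∈ Finset.range (N - 1), q j) / q (N - 1))
    (hprior : p (N - 1) ≤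
      (α * ∑ j ∈ Finset.range (N - 1), p j + β) / (((N : ℝ) - 2) * α + β))
    (θ₁ θ₂ : ℝ)
    (hθ₁ : θ₁ = α * (((N : ℝ) - 2) * q (N - 2) - ∑ j ∈ Finset.range (N - 2), q j)
        / (α * q (N - 1) - β * q (N - 2)))
    (hθ₂ : θ₂ = α * (((N : ℝ) - 1) * q (N - 1) - ∑ j ∈ Finset.range (N - 1), q j)
        / (q (N - 1) * (α - β))) :
    (if θ ≤ θ₁ then Real.log (α / q (N - 2))
      else if θ ≤ θ₂ then Real.log ((((N : ℝ) - 1) * α + θ * β) / δ)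
      else Real.log (α / q (N - 1)))
      ≤ pmlEnvelope (fun i j : Fin k => p i.val * (if j = i then α else β)) δ :=
  pmlEnvelope_krr_lower_bound_general k εr hεr p hp hpsum hmono α β hα hβ q hq δ hδu N hN2 hNk hNl
    hNu θ hθ hprior θ₁ θ₂ hθ₁ hθ₂
end
end

section
/- Let k ≥ 2, ε_r > 0, let P_X be a distribution on {1,…,k} with p_i = P_X(i) > 0 and p_1 ≤ … ≤ p_k, and let P_{Y|X} be the k-randomized response mechanism with α = e^{ε_r}/(e^{ε_r}+k−1), β = 1/(e^{ε_r}+k−1), q_j = β + (α−β)p_j. Fix δ ∈ (q_1, 1), let N ∈ {2,…,k} be the unique index with Σ_{j=1}^{N−1} q_j < δ ≤ Σ_{j=1}^{N} q_j, and θ = (δ − Σ_{j=1}^{N−1} q_j)/q_N. Then the binary envelope satisfies ε_b(δ) = log((α + (N−2+θ)β)/δ); equivalently, the supremum of the randomized-event leakage ℓ(X → w) = log max_x (Σ_y w(y) P_{Y|X=x}(y))/(Σ_y w(y) q_y) over weight functions w: {1,…,k} → [0,1] with Σ_y w(y) q_y ≥ δ equals log((α + (N−2+θ)β)/δ). -/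
/-!
For the `k`-randomized response mechanism the numerator of `ℓ(X → w)` is
`max_x ∑_y w_y P(y|x) = β ∑ w + (α - β) max w ≤ β ∑ w + (α - β)`, so one has to maximise the
mass `∑ w` of a weight `w ∈ [0,1]^k` relative to its `q`-mass `∑ w q ≥ δ`. By a Neyman–Pearson
exchange argument the optimum is the greedy weight that fills the outputs with the smallest
`q_j` first: `1` on the first `N - 1` of them and `θ` on the `N`-th. It has `q`-mass exactly `δ`,
mass `N - 1 + θ` and a coordinate equal to `1`, so its leakage is `log ((α + (N - 2 + θ) β) / δ)`.
-/

open Real Finset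
open scoped Classical

section FiniteWeights

variable {ι : Type*} [Fintype ι]

/-- Neyman–Pearson: a threshold weight minimises `∑ w g` among weights in `[0,1]`. -/
lemma sum_sub_mul_nonneg_of_threshold {w w' g : ι → ℝ} (hw : ∀ y, 0 ≤ w y ∧ w y ≤ 1)
    (hneg : ∀ y, g y < 0 → w' y = 1) (hpos : ∀ y, 0 < g y → w' y = 0) :
    0 ≤ ∑ y, (w y - w' y) * g y := by
  refine sum_nonneg fun y _ => ?_
  rcases lt_trichotomy (g y) 0 with hg | hg | hg
  · rw [hneg y hg]; nlinarith [(hw y).2]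
  · rw [hg, mul_zero]
  · rw [hpos y hg, sub_zero]; exact mul_nonneg (hw y).1 hg.le

lemma sum_mul_ite_eq [DecidableEq ι] (w : ι → ℝ) (α β : ℝ) (x : ι) :
    ∑ y, w y * (if y = x then α else β) = β * ∑ y, w y + (α - β) * w x := by
  have h : ∀ y, w y * (if y = x then α else β) = β * w y + if y = x then (α - β) * w y else 0 :=
    fun y => by split_ifs <;> ring
  simp only [h, sum_add_distrib, ← mul_sum, sum_ite_eq', mem_univ, if_true]

variable [Nonempty ι] [DecidableEq ι] {α β : ℝ}

lemma iSup_sum_mul_ite_le {w : ι → ℝ} (hw : ∀ y, w y ≤ 1) (hαβ : β ≤ α) :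
    ⨆ x, ∑ y, w y * (if y = x then α else β) ≤ β * ∑ y, w y + (α - β) :=
  ciSup_le fun x => by rw [sum_mul_ite_eq]; nlinarith [hw x]

lemma iSup_sum_mul_ite_eq {w : ι → ℝ} (hw : ∀ y, w y ≤ 1) (hαβ : β ≤ α) {x₀ : ι}
    (hx₀ : w x₀ = 1) :
    ⨆ x, ∑ y, w y * (if y = x then α else β) = β * ∑ y, w y + (α - β) := by
  refine (iSup_sum_mul_ite_le hw hαβ).antisymm ?_
  refine le_trans (le_of_eq ?_) (le_ciSup (Finite.bddAbove_range _) x₀)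
  rw [sum_mul_ite_eq, hx₀, mul_one]

end FiniteWeights

section StepWeight

variable {k M : ℕ} {θ : ℝ}

def stepWeight (M : ℕ) (θ : ℝ) (j : ℕ) : ℝ :=
  if j < M then 1 else if j = M then θ else 0

lemma stepWeight_mem_Icc (hθ0 : 0 ≤ θ) (hθ1 : θ ≤ 1) (j : ℕ) :
    0 ≤ stepWeight M θ j ∧ stepWeight M θ j ≤ 1 := by
  unfold stepWeight; split_ifs <;> constructor <;> linarith

lemma sum_range_stepWeight_mul (θ : ℝ) (f : ℕ → ℝ) (hMk : M < k) :
    ∑ j ∈ range k, stepWeight M θ j * f j = ∑ j ∈ range M, f j + θ * f M := by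
  induction k, hMk using Nat.le_induction with
  | base =>
    rw [sum_range_succ]
    simp only [stepWeight, lt_irrefl, if_false, if_true]
    congr 1
    exact sum_congr rfl fun j hj => by rw [if_pos (mem_range.mp hj), one_mul]
  | succ n hn ih =>
    rw [sum_range_succ, ih]
    simp [stepWeight, show ¬ n < M by omega, show n ≠ M by omega]

lemma sum_fin_stepWeight_mul (θ : ℝ) (f : ℕ → ℝ) (hMk : M < k) :
    ∑ y : Fin k, stepWeight M θ y * f y = ∑ j ∈ range M, f j + θ * f M :=
  (Fin.sum_univ_eq_sum_range (fun j => stepWeight M θ j * f j) k).trans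
    (sum_range_stepWeight_mul θ f hMk)

lemma sum_fin_stepWeight (θ : ℝ) (hMk : M < k) :
    ∑ y : Fin k, stepWeight M θ y = M + θ := by
  simpa using sum_fin_stepWeight_mul θ (fun _ => 1) hMk

end StepWeight

/-- `T`, `S` are the mass and `q`-mass of a feasible weight, `T₀`, `S₀` those of the threshold
weight, and `qM` is the threshold. -/
lemma add_le_div_mul_of_threshold {α β qM T S T₀ S₀ : ℝ} (hβ : 0 ≤ β) (hαβ : β ≤ α)
    (hqM : 0 < qM) (hS₀ : 0 < S₀) (hS : S₀ ≤ S) (hthr : qM * (T - T₀) ≤ S - S₀)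
    (h₀ : S₀ ≤ qM * T₀) :
    β * T + (α - β) ≤ (β * T₀ + (α - β)) / S₀ * S := by
  have hβS₀ : 0 ≤ β * S₀ := mul_nonneg hβ hS₀.le
  have hβΔ : 0 ≤ β * (S - S₀) := mul_nonneg hβ (sub_nonneg.2 hS)
  have hmass : qM * (β * T * S₀) ≤ qM * (β * T₀ * S) := by
    nlinarith [mul_le_mul_of_nonneg_left hthr hβS₀, mul_le_mul_of_nonneg_left h₀ hβΔ]
  have := le_of_mul_le_mul_left hmass hqM
  rw [div_mul_eq_mul_div, le_div_iff₀ hS₀]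
  nlinarith [mul_nonneg (sub_nonneg.2 hαβ) (sub_nonneg.2 hS)]

section KRR

variable {k M : ℕ} {α β θ : ℝ} {q : ℕ → ℝ}

/-- The leakage `ℓ(X → w)` of the randomized event `w` through `k`-randomized response. -/
noncomputable def eventLeakage (α β : ℝ) (q : ℕ → ℝ) (w : Fin k → ℝ) : ℝ :=
  log ((⨆ x, ∑ y, w y * (if y = x then α else β)) / ∑ y, w y * q y)

lemma mul_sum_sub_le_sum_mul_sub (hmono : ∀ i j, i ≤ j → j < k → q i ≤ q j) (hMk : M < k)
    {w : Fin k → ℝ} (hw : ∀ y, 0 ≤ w y ∧ w y ≤ 1) :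
    q M * (∑ y, w y - (M + θ)) ≤ ∑ y, w y * q y - (∑ j ∈ range M, q j + θ * q M) := by
  have key := sum_sub_mul_nonneg_of_threshold (g := fun y : Fin k => q y - q M)
    (w' := fun y : Fin k => stepWeight M θ y) hw
    (fun y hy => if_pos (lt_of_not_ge fun h => (sub_neg.1 hy).not_ge (hmono _ _ h y.2)))
    (fun y hy => by
      have : ¬ (y : ℕ) ≤ M := fun h => (sub_pos.1 hy).not_ge (hmono _ _ h hMk)
      simp only [stepWeight, if_neg (show ¬ (y : ℕ) < M by omega),
        if_neg (show (y : ℕ) ≠ M by omega)])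
  have hT := sum_fin_stepWeight θ hMk
  have hS := sum_fin_stepWeight_mul θ q hMk
  simp only [sub_mul, mul_sub, sum_sub_distrib, ← sum_mul] at key
  rw [← hT, ← hS]
  linarith

lemma eventLeakage_le (hβ : 0 < β) (hαβ : β ≤ α) (hmono : ∀ i j, i ≤ j → j < k → q i ≤ q j)
    (hqM : 0 < q M) (hMk : M < k) {δ : ℝ} (hδ : ∑ j ∈ range M, q j + θ * q M = δ) (hδ0 : 0 < δ)
    {w : Fin k → ℝ} (hw : ∀ y, 0 ≤ w y ∧ w y ≤ 1) (hwδ : δ ≤ ∑ y, w y * q y) :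
    eventLeakage α β q w ≤ log ((β * (M + θ) + (α - β)) / δ) := by
  have : Nonempty (Fin k) := ⟨⟨M, hMk⟩⟩
  have hS : 0 < ∑ y, w y * q y := hδ0.trans_le hwδ
  obtain ⟨x, -, hx⟩ := exists_ne_zero_of_sum_ne_zero hS.ne'
  have hwx : 0 < w x := (hw x).1.lt_of_ne (left_ne_zero_of_mul hx).symm
  have hnum₀ : 0 < ⨆ x, ∑ y, w y * (if y = x then α else β) := by
    refine lt_of_lt_of_le ?_ (le_ciSup (Finite.bddAbove_range _) x)
    rw [sum_mul_ite_eq]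
    have := single_le_sum (fun y _ => (hw y).1) (mem_univ x)
    nlinarith
  have hnum : ⨆ x, ∑ y, w y * (if y = x then α else β) ≤
      (β * (M + θ) + (α - β)) / δ * ∑ y, w y * q y := by
    refine (iSup_sum_mul_ite_le (fun y => (hw y).2) hαβ).trans ?_
    -- the exchange inequality at `w = 0` says `δ ≤ q M * (M + θ)`
    have h₀ := mul_sum_sub_le_sum_mul_sub (θ := θ) hmono hMk (w := 0) (by simp)
    simp only [Pi.zero_apply, zero_mul, sum_const_zero, zero_sub, hδ] at h₀
    exact add_le_div_mul_of_threshold hβ.le hαβ hqM hδ0 hwδ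
      (hδ ▸ mul_sum_sub_le_sum_mul_sub hmono hMk hw) (by linarith)
  unfold eventLeakage
  refine log_le_log (div_pos hnum₀ hS) ?_
  rwa [div_le_iff₀ hS]

lemma eventLeakage_stepWeight (hαβ : β ≤ α) (hM : 0 < M) (hMk : M < k) (hθ0 : 0 ≤ θ)
    (hθ1 : θ ≤ 1) :
    eventLeakage α β q (fun y : Fin k => stepWeight M θ y) =
      log ((β * (M + θ) + (α - β)) / (∑ j ∈ range M, q j + θ * q M)) := by
  have : Nonempty (Fin k) := ⟨⟨M, hMk⟩⟩
  have h₀ : stepWeight M θ ((⟨0, hM.trans hMk⟩ : Fin k) : ℕ) = 1 := if_pos hM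
  unfold eventLeakage
  rw [iSup_sum_mul_ite_eq (fun y => (stepWeight_mem_Icc hθ0 hθ1 _).2) hαβ h₀,
    sum_fin_stepWeight θ hMk, sum_fin_stepWeight_mul θ q hMk]

end KRR

/-- Index `j ∈ {0, …, k-1}` is the paper's `j + 1`, so the paper's `q_N` is `q (N - 1)`. -/
theorem binary_envelope_krr_general
    (k : ℕ) (εr : ℝ) (hεr : 0 < εr)
    (p : ℕ → ℝ) (hp : ∀ i, i < k → 0 < p i)
    (hmono : ∀ i j, i ≤ j → j < k → p i ≤ p j)
    (α β : ℝ)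
    (hα : α = Real.exp εr / (Real.exp εr + k - 1))
    (hβ : β = 1 / (Real.exp εr + k - 1))
    (q : ℕ → ℝ) (hq : ∀ j, q j = β + (α - β) * p j)
    (δ : ℝ)
    (N : ℕ) (hN2 : 2 ≤ N) (hNk : N ≤ k)
    (hNl : ∑ j ∈ Finset.range (N - 1), q j < δ)
    (hNu : δ ≤ ∑ j ∈ Finset.range N, q j)
    (θ : ℝ) (hθ : θ = (δ - ∑ j ∈ Finset.range (N - 1), q j) / q (N - 1)) :
    sSup {e : ℝ | ∃ w : Fin k → ℝ, (∀ y, 0 ≤ w y ∧ w y ≤ 1) ∧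
        δ ≤ ∑ y, w y * q y.val ∧
        e = Real.log ((⨆ x : Fin k, ∑ y, w y * (if y = x then α else β)) /
              (∑ y, w y * q y.val))}
      = Real.log ((α + ((N : ℝ) - 2 + θ) * β) / δ) := by
  obtain ⟨M, rfl⟩ : ∃ M, N = M + 1 := ⟨N - 1, by omega⟩
  rw [Nat.add_sub_cancel] at hNl hθ
  rw [sum_range_succ] at hNu
  have hMk : M < k := by omega
  have hE : 1 < exp εr := one_lt_exp_iff.2 hεr
  have hD : 0 < exp εr + k - 1 := by have := k.cast_nonneg (α := ℝ); linarith
  have hβ0 : 0 < β := by rw [hβ]; exact div_pos one_pos hD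
  have hαβ : β ≤ α := by rw [hα, hβ]; gcongr
  have hq0 : ∀ j < k, 0 < q j := fun j hj => by rw [hq]; nlinarith [hp j hj]
  have hqmono : ∀ i j, i ≤ j → j < k → q i ≤ q j := fun i j hij hj => by
    rw [hq, hq]; nlinarith [hmono i j hij hj]
  have hθ0 : 0 < θ := by rw [hθ]; exact div_pos (by linarith) (hq0 M hMk)
  have hθ1 : θ ≤ 1 := by rw [hθ, div_le_one (hq0 M hMk)]; linarith
  have hδ : ∑ j ∈ range M, q j + θ * q M = δ := by rw [hθ]; field_simp [(hq0 M hMk).ne']; ring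
  have hδ0 : 0 < δ :=
    (sum_nonneg fun j hj => (hq0 j ((mem_range.1 hj).trans hMk)).le).trans_lt hNl
  have hvalue : α + (((M + 1 : ℕ) : ℝ) - 2 + θ) * β = β * (M + θ) + (α - β) := by push_cast; ring
  rw [hvalue]
  refine IsGreatest.csSup_eq ⟨⟨fun y => stepWeight M θ y, fun y => stepWeight_mem_Icc hθ0.le hθ1 y,
    (hδ.symm.trans (sum_fin_stepWeight_mul θ q hMk).symm).le, ?_⟩, ?_⟩
  · rw [← hδ]; exact (eventLeakage_stepWeight hαβ (by omega) hMk hθ0.le hθ1).symm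
  · rintro _ ⟨w, hw, hwδ, rfl⟩
    exact eventLeakage_le hβ0 hαβ hqmono (hq0 M hMk) hMk hδ hδ0 hw hwδ

/-- Binary envelope of the `k`-randomized response mechanism,
in its equivalent randomized-event formulation. The prior `p` and output marginal
`q` are indexed by `ℕ`, with index `j ∈ {0, …, k-1}` corresponding to the paper's
index `j+1 ∈ {1, …, k}` (so the paper's `q_N` is `q (N-1)`). The supremum of the
randomized-event leakage `ℓ(X → w) = log (max_x (∑_y w_y P_{Y|X=x}(y)) / (∑_y w_y q_y))`
over weight functions `w : {1,…,k} → [0,1]` with `∑_y w_y q_y ≥ δ` equals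
`log ((α + (N-2+θ) β) / δ)`. -/
theorem binary_envelope_krr
    (k : ℕ) (hk : 2 ≤ k) (εr : ℝ) (hεr : 0 < εr)
    (p : ℕ → ℝ) (hp : ∀ i, i < k → 0 < p i)
    (hpsum : ∑ i ∈ Finset.range k, p i = 1)
    (hmono : ∀ i j, i ≤ j → j < k → p i ≤ p j)
    (α β : ℝ)
    (hα : α = Real.exp εr / (Real.exp εr + k - 1))
    (hβ : β = 1 / (Real.exp εr + k - 1))
    (q : ℕ → ℝ) (hq : ∀ j, q j = β + (α - β) * p j)
    (δ : ℝ) (hδl : q 0 < δ) (hδu : δ < 1)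
    (N : ℕ) (hN2 : 2 ≤ N) (hNk : N ≤ k)
    (hNl : ∑ j ∈ Finset.range (N - 1), q j < δ)
    (hNu : δ ≤ ∑ j ∈ Finset.range N, q j)
    (θ : ℝ) (hθ : θ = (δ - ∑ j ∈ Finset.range (N - 1), q j) / q (N - 1)) :
    sSup {e : ℝ | ∃ w : Fin k → ℝ, (∀ y, 0 ≤ w y ∧ w y ≤ 1) ∧
        δ ≤ ∑ y, w y * q y.val ∧
        e = Real.log ((⨆ x : Fin k, ∑ y, w y * (if y = x then α else β)) /
              (∑ y, w y * q y.val))}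
      = Real.log ((α + ((N : ℝ) - 2 + θ) * β) / δ) :=
  binary_envelope_krr_general k εr hεr p hp hmono α β hα hβ q hq δ N hN2 hNk hNl hNu θ hθ
end
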